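/- arXiv:2511.02934 — 5 statements merged into one kernel-verified Lean document; each statement's English description precedes it below -/
import Mathlib

section
/- Let d ≥ 2, r ∈ (0,1], M ≥ 0, and let φ : ℝ^d × ℝ^d → ℝ be continuous with |φ(x,v)| ≤ M for all (x,v). Fix t ≥ 0 and (x,v) ∈ ℝ^d × ℝ^d. For ω₁,…,ω_k ∈ S^{d−1} define the forward velocities v^{(0)} = v and v^{(l)} = v^{(l−1)} − (1+r)⟨v^{(l−1)}, ω_l⟩ω_l, and use the convention t₀ = t. Then the series ψ(t,x,v) := exp(−C_d‖v‖t)·φ(x + t·v, v) + Σ_{k≥1} ∫_{0}^{t} ∫_{S^{d−1}} ⋯ ∫_{0}^{t_{k−1}} ∫_{S^{d−1}} exp(Σ_{j=1}^{k} C_d‖v^{(j−1)}‖(t_j − t_{j−1}) − C_d‖v^{(k)}‖t_k) · (∏_{l=1}^{k} |⟨v^{(l−1)}, ω_l⟩|) · φ(x + Σ_{m=1}^{k} (t_{m−1} − t_m)v^{(m−1)} + t_k v^{(k)}, v^{(k)}) dσ(ω_k) dt_k ⋯ dσ(ω₁) dt₁ converges absolutely, and the resulting value satisfies |ψ(t,x,v)|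 ≤ M·exp(C_d‖v‖t). -/
/-!
Each term of the series is bounded by `M (C_d ‖v‖ t)ᵏ / k!`. The exponential weight is at most `1`
because the collision times decrease. A collision with restitution `r ≤ 1` does not increase the
speed, and rotation invariance of `σ` gives `∫ |⟪w, ω⟫| dσ(ω) = C_d ‖w‖`, so integrating out the
angles from the last one backwards costs at most `(C_d ‖v‖)ᵏ`. The ordered times fill a simplex of
volume `tᵏ / k!`. Summing, the collision terms contribute at most `M (exp (C_d ‖v‖ t) - 1)` and the
free-transport term at most `M`.
-/

open MeasureTheory Metric
open scoped RealInnerProductSpace ENNReal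

noncomputable section

/-- The surface measure on the unit sphere of `ℝ^d`. -/
def sphereSurfaceMeasure (d : ℕ) :
    Measure (sphere (0 : EuclideanSpace ℝ (Fin d)) 1) :=
  (volume : Measure (EuclideanSpace ℝ (Fin d))).toSphere

/-- The dimensional constant `C_d = ∫_{S^{d−1}} |⟪e₁,ω⟫| dσ(ω)`. -/
def dimConst (d : ℕ) : ℝ :=
  ∫ ω : sphere (0 : EuclideanSpace ℝ (Fin d)) 1,
    |⟪(if h : 0 < d then EuclideanSpace.single (⟨0, h⟩ : Fin d) (1 : ℝ) else 0),
      (ω : EuclideanSpace ℝ (Fin d))⟫| ∂ sphereSurfaceMeasure d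

/-- The forward post-collisional velocities: `v^{(0)} = v` and
`v^{(l+1)} = v^{(l)} − (1+r)⟪v^{(l)}, ω_l⟫ ω_l` (with `ω` indexed from `0`). -/
def forwardVelocity (d : ℕ) (r : ℝ) (v : EuclideanSpace ℝ (Fin d))
    (ω : ℕ → EuclideanSpace ℝ (Fin d)) : ℕ → EuclideanSpace ℝ (Fin d)
  | 0 => v
  | l + 1 => forwardVelocity d r v ω l
      - ((1 + r) * ⟪forwardVelocity d r v ω l, ω l⟫) • ω l

/-- Extension of a finite family of angular parameters on the sphere to a function on `ℕ`. -/
def extendAngles (d k : ℕ) (ω : Fin k → sphere (0 : EuclideanSpace ℝ (Fin d)) 1) :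
    ℕ → EuclideanSpace ℝ (Fin d) :=
  fun n => if h : n < k then (ω ⟨n, h⟩ : EuclideanSpace ℝ (Fin d)) else 0

/-- Extension of the collision times `t₁ ≥ ⋯ ≥ t_k` (zero-indexed) to a function on `ℕ` with
the convention `t₀ = t`. -/
def extendTimes (t : ℝ) {k : ℕ} (τ : Fin k → ℝ) : ℕ → ℝ :=
  fun j => if h : 1 ≤ j ∧ j - 1 < k then τ ⟨j - 1, h.2⟩ else t

/-- The simplex `0 ≤ t_k ≤ t_{k−1} ≤ ⋯ ≤ t₁ ≤ t` of ordered collision times. -/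
def collisionSimplex (k : ℕ) (t : ℝ) : Set (Fin k → ℝ) :=
  {τ | (∀ i : Fin k, 0 ≤ τ i ∧ τ i ≤ t) ∧ ∀ i j : Fin k, i ≤ j → τ j ≤ τ i}

/-- The integrand of the `k`-th term of the series representation of the solution of the
adjoint equation of the linear inelastic Boltzmann equation. -/
def adjointIntegrand (d k : ℕ) (r : ℝ)
    (φ : EuclideanSpace ℝ (Fin d) × EuclideanSpace ℝ (Fin d) → ℝ)
    (t : ℝ) (x v : EuclideanSpace ℝ (Fin d))
    (q : (Fin k → ℝ) × (Fin k → sphere (0 : EuclideanSpace ℝ (Fin d)) 1)) : ℝ :=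
  Real.exp ((∑ j : Fin k, dimConst d *
        ‖forwardVelocity d r v (extendAngles d k q.2) (j : ℕ)‖ *
        (extendTimes t q.1 ((j : ℕ) + 1) - extendTimes t q.1 (j : ℕ)))
      - dimConst d * ‖forwardVelocity d r v (extendAngles d k q.2) k‖
          * extendTimes t q.1 k)
    * (∏ l : Fin k,
        |⟪forwardVelocity d r v (extendAngles d k q.2) (l : ℕ),
            extendAngles d k q.2 (l : ℕ)⟫|)
    * φ (x + (∑ m : Fin k,
          (extendTimes t q.1 (m : ℕ) - extendTimes t q.1 ((m : ℕ) + 1)) •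
            forwardVelocity d r v (extendAngles d k q.2) (m : ℕ))
        + extendTimes t q.1 k • forwardVelocity d r v (extendAngles d k q.2) k,
      forwardVelocity d r v (extendAngles d k q.2) k)

/-- The measure on the domain of the `k`-fold collision integral: Lebesgue measure on the
collision times times the `k`-fold product of the surface measure on the sphere. -/
def adjointMeasure (d k : ℕ) :
    Measure ((Fin k → ℝ) × (Fin k → sphere (0 : EuclideanSpace ℝ (Fin d)) 1)) :=
  (volume : Measure (Fin k → ℝ)).prod (Measure.pi fun _ : Fin k => sphereSurfaceMeasure d)

/-- The domain of the `k`-fold collision integral: the simplex of ordered collision times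
times the whole `k`-fold product of the sphere. -/
def adjointDomain (d k : ℕ) (t : ℝ) :
    Set ((Fin k → ℝ) × (Fin k → sphere (0 : EuclideanSpace ℝ (Fin d)) 1)) :=
  (collisionSimplex k t) ×ˢ (Set.univ : Set (Fin k → sphere (0 : EuclideanSpace ℝ (Fin d)) 1))

open scoped Pointwise

lemma LinearEquiv.preimage_smul {R M N : Type*} [Semiring R] [AddCommMonoid M] [AddCommMonoid N]
    [Module R M] [Module R N] (e : M ≃ₗ[R] N) (T : Set R) (A : Set N) :
    e ⁻¹' (T • A) = T • e ⁻¹' A := by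
  ext z
  simp only [Set.mem_smul, Set.mem_preimage]
  constructor
  · rintro ⟨c, hc, y, hy, hz⟩
    refine ⟨c, hc, e.symm y, by simpa using hy, e.injective ?_⟩
    rw [e.map_smul, e.apply_symm_apply, hz]
  · rintro ⟨c, hc, y, hy, rfl⟩
    exact ⟨c, hc, e y, hy, (e.map_smul c y).symm⟩

namespace LinearIsometryEquiv

variable {E : Type*} [NormedAddCommGroup E] [NormedSpace ℝ E] (e : E ≃ₗᵢ[ℝ] E)

def sphereMap : sphere (0 : E) 1 → sphere (0 : E) 1 :=
  fun ω => ⟨e ω, by simp⟩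

lemma continuous_sphereMap : Continuous e.sphereMap :=
  (e.continuous.comp continuous_subtype_val).subtype_mk _

lemma image_coe_preimage_sphereMap (s : Set (sphere (0 : E) 1)) :
    ((↑) : sphere (0 : E) 1 → E) '' (e.sphereMap ⁻¹' s) = e ⁻¹' ((↑) '' s) := by
  ext z
  constructor
  · rintro ⟨ω, hω, rfl⟩
    exact ⟨e.sphereMap ω, hω, rfl⟩
  · rintro ⟨ω, hω, hωz⟩
    have hz : z ∈ sphere (0 : E) 1 := by simpa [← hωz] using (e.norm_map z).symm
    have hmap : e.sphereMap ⟨z, hz⟩ = ω := Subtype.ext hωz.symm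
    exact ⟨⟨z, hz⟩, by rwa [Set.mem_preimage, hmap], rfl⟩

lemma measurePreserving_sphereMap [MeasurableSpace E] [BorelSpace E] {μ : Measure E}
    (he : MeasurePreserving e μ μ) :
    MeasurePreserving e.sphereMap μ.toSphere μ.toSphere := by
  refine ⟨e.continuous_sphereMap.measurable, Measure.ext fun s hs => ?_⟩
  have hpre := e.continuous_sphereMap.measurable hs
  have hsmul := e.toLinearEquiv.preimage_smul (Set.Ioo (0 : ℝ) 1) ((↑) '' s)
  rw [LinearIsometryEquiv.coe_toLinearEquiv] at hsmul
  rw [Measure.map_apply e.continuous_sphereMap.measurable hs, Measure.toSphere_apply' _ hpre,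
    Measure.toSphere_apply' _ hs, image_coe_preimage_sphereMap, ← hsmul,
    he.measure_preimage_emb e.toHomeomorph.measurableEmbedding]

end LinearIsometryEquiv

section Sphere

variable {d : ℕ}

local notation "E" => EuclideanSpace ℝ (Fin d)
local notation "S" => sphere (0 : EuclideanSpace ℝ (Fin d)) 1

instance : IsFiniteMeasure (sphereSurfaceMeasure d) := by
  unfold sphereSurfaceMeasure; infer_instance

lemma dimConst_nonneg : 0 ≤ dimConst d :=
  integral_nonneg fun _ => abs_nonneg _

lemma continuous_abs_inner_sphere (w : E) : Continuous fun ω : S => |⟪w, (ω : E)⟫| :=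
  (continuous_const.inner continuous_subtype_val).abs

lemma lintegral_abs_inner_sphere (hd : 0 < d) (w : E) :
    ∫⁻ ω : S, ENNReal.ofReal |⟪w, (ω : E)⟫| ∂sphereSurfaceMeasure d
      = ENNReal.ofReal (dimConst d * ‖w‖) := by
  set e₁ : E := EuclideanSpace.single ⟨0, hd⟩ 1
  have hC : ∫⁻ ω : S, ENNReal.ofReal |⟪e₁, (ω : E)⟫| ∂sphereSurfaceMeasure d
      = ENNReal.ofReal (dimConst d) := by
    rw [dimConst, dif_pos hd, ofReal_integral_eq_lintegral_ofReal
      ((continuous_abs_inner_sphere e₁).integrable_of_hasCompactSupport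
        (HasCompactSupport.of_compactSpace _)) (.of_forall fun _ => abs_nonneg _)]
  set ρ := Submodule.reflection (ℝ ∙ (‖w‖ • e₁ - w))ᗮ
  have hρ : ρ (‖w‖ • e₁) = w := Submodule.reflection_sub (by simp [e₁, norm_smul])
  calc ∫⁻ ω : S, ENNReal.ofReal |⟪w, (ω : E)⟫| ∂sphereSurfaceMeasure d
      = ∫⁻ ω : S, ENNReal.ofReal |⟪w, (ρ.sphereMap ω : E)⟫| ∂sphereSurfaceMeasure d :=
        ((ρ.measurePreserving_sphereMap ρ.measurePreserving).lintegral_comp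
          (ENNReal.measurable_ofReal.comp (continuous_abs_inner_sphere w).measurable)).symm
    _ = ∫⁻ ω : S, ENNReal.ofReal ‖w‖ * ENNReal.ofReal |⟪e₁, (ω : E)⟫| ∂sphereSurfaceMeasure d := by
        refine lintegral_congr fun ω => ?_
        conv_lhs => rw [← hρ]
        rw [LinearIsometryEquiv.sphereMap, LinearIsometryEquiv.inner_map_map,
          real_inner_smul_left, abs_mul, abs_norm, ENNReal.ofReal_mul (norm_nonneg w)]
    _ = ENNReal.ofReal (dimConst d * ‖w‖) := by
        rw [lintegral_const_mul' _ _ ENNReal.ofReal_ne_top, hC,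
          ← ENNReal.ofReal_mul (norm_nonneg w), mul_comm]

end Sphere

lemma norm_sub_mul_inner_smul_le {F : Type*} [NormedAddCommGroup F] [InnerProductSpace ℝ F]
    {r : ℝ} (hr : r ∈ Set.Icc (-1 : ℝ) 1) {ω : F} (hω : ‖ω‖ ≤ 1) (w : F) :
    ‖w - ((1 + r) * ⟪w, ω⟫) • ω‖ ≤ ‖w‖ := by
  -- `‖w‖² - ‖w - (1 + r) ⟪w, ω⟫ ω‖² = (1 + r) ⟪w, ω⟫² (2 - (1 + r) ‖ω‖²) ≥ 0`
  have hsq : ‖w - ((1 + r) * ⟪w, ω⟫) • ω‖ ^ 2 ≤ ‖w‖ ^ 2 := by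
    rw [norm_sub_sq_real, real_inner_smul_right, norm_smul, Real.norm_eq_abs, mul_pow, sq_abs]
    have : (1 + r) * ‖ω‖ ^ 2 ≤ 2 := by nlinarith [hr.1, hr.2, norm_nonneg ω]
    nlinarith [mul_nonneg (mul_nonneg (neg_le_iff_add_nonneg'.1 hr.1) (sq_nonneg ⟪w, ω⟫))
      (sub_nonneg.2 this)]
  exact (pow_le_pow_iff_left₀ (norm_nonneg _) (norm_nonneg _) two_ne_zero).1 hsq

section Collisions

variable {d : ℕ} {r : ℝ} {v : EuclideanSpace ℝ (Fin d)}

local notation "E" => EuclideanSpace ℝ (Fin d)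
local notation "S" => sphere (0 : EuclideanSpace ℝ (Fin d)) 1

lemma norm_forwardVelocity_le (hr : r ∈ Set.Icc (-1 : ℝ) 1) {ω : ℕ → E}
    (hω : ∀ l, ‖ω l‖ ≤ 1) (l : ℕ) : ‖forwardVelocity d r v ω l‖ ≤ ‖v‖ := by
  induction l with
  | zero => exact le_rfl
  | succ l ih => exact (norm_sub_mul_inner_smul_le hr (hω l) _).trans ih

lemma forwardVelocity_congr {ω ω' : ℕ → E} {l : ℕ} (h : ∀ m < l, ω m = ω' m) :
    forwardVelocity d r v ω l = forwardVelocity d r v ω' l := by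
  induction l with
  | zero => rfl
  | succ l ih =>
    simp only [forwardVelocity, ih fun m hm => h m (hm.trans l.lt_succ_self), h l l.lt_succ_self]

lemma continuous_forwardVelocity {X : Type*} [TopologicalSpace X] {ω : X → ℕ → E}
    (hω : ∀ l, Continuous fun x => ω x l) (l : ℕ) :
    Continuous fun x => forwardVelocity d r v (ω x) l := by
  induction l with
  | zero => exact continuous_const
  | succ l ih =>
    exact ih.sub ((continuous_const.mul (Continuous.inner (𝕜 := ℝ) ih (hω l))).smul (hω l))

lemma norm_extendAngles_le {k : ℕ} (ω : Fin k → S) (l : ℕ) : ‖extendAngles d k ω l‖ ≤ 1 := by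
  unfold extendAngles
  split_ifs <;> simp

lemma continuous_extendAngles (k l : ℕ) : Continuous fun ω : Fin k → S => extendAngles d k ω l := by
  unfold extendAngles
  split_ifs
  · exact continuous_subtype_val.comp (continuous_apply _)
  · exact continuous_const

lemma extendAngles_snoc_of_lt {n : ℕ} (g : Fin n → S) (a : S) {m : ℕ} (hm : m < n) :
    extendAngles d (n + 1) (Fin.snoc g a) m = extendAngles d n g m := by
  simp only [extendAngles, dif_pos hm, dif_pos (hm.trans n.lt_succ_self)]
  exact congrArg Subtype.val (Fin.snoc_castSucc (α := fun _ => S) a g ⟨m, hm⟩)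

lemma extendAngles_snoc_self {n : ℕ} (g : Fin n → S) (a : S) :
    extendAngles d (n + 1) (Fin.snoc g a) n = a := by
  simp only [extendAngles, dif_pos n.lt_succ_self]
  exact congrArg Subtype.val (Fin.snoc_last (α := fun _ => S) a g)

lemma forwardVelocity_snoc {n : ℕ} (g : Fin n → S) (a : S) {l : ℕ} (hl : l ≤ n) :
    forwardVelocity d r v (extendAngles d (n + 1) (Fin.snoc g a)) l
      = forwardVelocity d r v (extendAngles d n g) l :=
  forwardVelocity_congr fun _ hm => extendAngles_snoc_of_lt g a (hm.trans_le hl)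

end Collisions

lemma MeasureTheory.Measure.map_insertNth_prod_pi {α : Type*} [MeasurableSpace α] (μ : Measure α)
    [SigmaFinite μ] {n : ℕ} (i : Fin (n + 1)) :
    (μ.prod (Measure.pi fun _ : Fin n => μ)).map (fun p => i.insertNth (α := fun _ => α) p.1 p.2)
      = Measure.pi fun _ => μ :=
  (measurePreserving_piFinSuccAbove (fun _ => μ) i).symm.map_eq

lemma measurable_insertNth {α : Type*} [MeasurableSpace α] {n : ℕ} (i : Fin (n + 1)) :
    Measurable fun p : α × (Fin n → α) => i.insertNth (α := fun _ => α) p.1 p.2 :=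
  (MeasurableEquiv.piFinSuccAbove (fun _ => α) i).symm.measurable

def collisionWeight (d : ℕ) (r : ℝ) (v : EuclideanSpace ℝ (Fin d)) {n : ℕ}
    (ω : Fin n → sphere (0 : EuclideanSpace ℝ (Fin d)) 1) : ℝ :=
  ∏ l : Fin n, |⟪forwardVelocity d r v (extendAngles d n ω) l, extendAngles d n ω l⟫|

section CollisionWeight

variable {d : ℕ} {r : ℝ} {v : EuclideanSpace ℝ (Fin d)}

local notation "E" => EuclideanSpace ℝ (Fin d)
local notation "S" => sphere (0 : EuclideanSpace ℝ (Fin d)) 1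

lemma collisionWeight_nonneg {n : ℕ} (ω : Fin n → S) : 0 ≤ collisionWeight d r v ω :=
  Finset.prod_nonneg fun _ _ => abs_nonneg _

lemma measurable_collisionWeight (n : ℕ) : Measurable (collisionWeight d r v (n := n)) :=
  Continuous.measurable <| continuous_finsetProd _ fun l _ => ((continuous_forwardVelocity
    (continuous_extendAngles n) l).inner (continuous_extendAngles n l)).abs

lemma collisionWeight_snoc {n : ℕ} (g : Fin n → S) (a : S) :
    collisionWeight d r v (Fin.snoc g a)
      = collisionWeight d r v g * |⟪forwardVelocity d r v (extendAngles d n g) n, (a : E)⟫| := by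
  rw [collisionWeight, Fin.prod_univ_castSucc]
  congr 1
  · refine Finset.prod_congr rfl fun l _ => ?_
    rw [Fin.val_castSucc, forwardVelocity_snoc g a l.2.le, extendAngles_snoc_of_lt g a l.2]
  · rw [Fin.val_last, forwardVelocity_snoc g a le_rfl, extendAngles_snoc_self]

lemma lintegral_collisionWeight_le (hd : 0 < d) (hr : r ∈ Set.Icc (-1 : ℝ) 1) (n : ℕ) :
    ∫⁻ ω : Fin n → S, ENNReal.ofReal (collisionWeight d r v ω)
        ∂(Measure.pi fun _ => sphereSurfaceMeasure d)
      ≤ ENNReal.ofReal (dimConst d * ‖v‖) ^ n := by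
  induction n with
  | zero => simp [collisionWeight]
  | succ n ih =>
    set σ := sphereSurfaceMeasure d
    have hW : ∀ k, Measurable fun ω : Fin k → S => ENNReal.ofReal (collisionWeight d r v ω) :=
      fun k => (measurable_collisionWeight k).ennreal_ofReal
    have hlast : ∀ g : Fin n → S, ∫⁻ a, ENNReal.ofReal (collisionWeight d r v (Fin.snoc g a)) ∂σ
        ≤ ENNReal.ofReal (collisionWeight d r v g) * ENNReal.ofReal (dimConst d * ‖v‖) := by
      intro g
      simp only [collisionWeight_snoc, ENNReal.ofReal_mul (collisionWeight_nonneg g)]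
      rw [lintegral_const_mul' _ _ ENNReal.ofReal_ne_top, lintegral_abs_inner_sphere hd]
      gcongr
      exacts [dimConst_nonneg, norm_forwardVelocity_le hr (norm_extendAngles_le g) n]
    rw [← Measure.map_insertNth_prod_pi σ (Fin.last n),
      lintegral_map (hW _) (measurable_insertNth _), lintegral_prod_symm
        (fun p => ENNReal.ofReal (collisionWeight d r v ((Fin.last n).insertNth p.1 p.2)))
        ((hW _).comp (measurable_insertNth _)).aemeasurable]
    simp only [Fin.insertNth_last']
    calc ∫⁻ g, ∫⁻ a, ENNReal.ofReal (collisionWeight d r v (Fin.snoc g a)) ∂σ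
          ∂(Measure.pi fun _ => σ)
        ≤ ∫⁻ g, ENNReal.ofReal (collisionWeight d r v g) * ENNReal.ofReal (dimConst d * ‖v‖)
          ∂(Measure.pi fun _ => σ) := lintegral_mono hlast
      _ ≤ ENNReal.ofReal (dimConst d * ‖v‖) ^ (n + 1) := by
          rw [lintegral_mul_const _ (hW n), pow_succ]
          gcongr

end CollisionWeight

section CollisionSimplex

lemma isClosed_collisionSimplex (k : ℕ) (t : ℝ) : IsClosed (collisionSimplex k t) := by
  simp only [collisionSimplex, Set.ofPred_and, Set.ofPred_forall]
  refine .inter (isClosed_iInter fun i => .inter ?_ ?_)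
    (isClosed_iInter fun i => isClosed_iInter fun j => isClosed_iInter fun _ => ?_)
  · exact isClosed_le continuous_const (continuous_apply i)
  · exact isClosed_le (continuous_apply i) continuous_const
  · exact isClosed_le (continuous_apply j) (continuous_apply i)

lemma cons_mem_collisionSimplex_iff {n : ℕ} {t a : ℝ} {τ : Fin n → ℝ} :
    Fin.cons a τ ∈ collisionSimplex (n + 1) t ↔ a ∈ Set.Icc 0 t ∧ τ ∈ collisionSimplex n a := by
  simp only [collisionSimplex, Set.mem_ofPred_eq, Fin.forall_fin_succ, Fin.cons_zero,
    Fin.cons_succ, Fin.succ_le_succ_iff, Fin.zero_le, Fin.le_zero_iff, Fin.succ_ne_zero,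
    Set.mem_Icc, le_refl, true_implies, false_implies, true_and]
  constructor
  · rintro ⟨⟨ha, hτt⟩, hτa, hτ⟩
    exact ⟨ha, fun i => ⟨(hτt i).1, hτa i⟩, hτ⟩
  · rintro ⟨ha, hτa, hτ⟩
    exact ⟨⟨ha, fun i => ⟨(hτa i).1, (hτa i).2.trans ha.2⟩⟩, fun i => (hτa i).2, hτ⟩

lemma setLIntegral_Icc_pow_div_factorial (n : ℕ) {t : ℝ} (ht : 0 ≤ t) :
    ∫⁻ a in Set.Icc 0 t, ENNReal.ofReal (a ^ n / n.factorial)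
      = ENNReal.ofReal (t ^ (n + 1) / (n + 1).factorial) := by
  rw [← ofReal_integral_eq_lintegral_ofReal ((continuous_pow n).div_const _).integrableOn_Icc
    ((ae_restrict_mem measurableSet_Icc).mono fun a ha => by have := ha.1; positivity),
    integral_div, integral_Icc_eq_integral_Ioc, ← intervalIntegral.integral_of_le ht, integral_pow,
    Nat.factorial_succ]
  congr 1
  push_cast
  field_simp
  ring

lemma volume_collisionSimplex (n : ℕ) {t : ℝ} (ht : 0 ≤ t) :
    volume (collisionSimplex n t) = ENNReal.ofReal (t ^ n / n.factorial) := by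
  induction n generalizing t with
  | zero => simp [collisionSimplex, volume_pi]
  | succ n ih =>
    have hslice : ∀ a, Prod.mk a ⁻¹' ((fun p : ℝ × (Fin n → ℝ) => Fin.insertNth 0 p.1 p.2) ⁻¹'
        collisionSimplex (n + 1) t) = {τ | a ∈ Set.Icc 0 t ∧ τ ∈ collisionSimplex n a} := by
      intro a
      ext τ
      simp only [Set.mem_preimage, Fin.insertNth_zero']
      exact cons_mem_collisionSimplex_iff
    have hvol : ∀ a, (Measure.pi fun _ => volume) {τ | a ∈ Set.Icc 0 t ∧ τ ∈ collisionSimplex n a}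
        = (Set.Icc 0 t).indicator (fun a => ENNReal.ofReal (a ^ n / n.factorial)) a := by
      intro a
      by_cases ha : a ∈ Set.Icc 0 t
      · simp [ha, ← volume_pi, ih ha.1]
      · simp [ha]
    rw [volume_pi, ← Measure.map_insertNth_prod_pi volume 0,
      Measure.map_apply (measurable_insertNth 0) (isClosed_collisionSimplex _ _).measurableSet,
      Measure.prod_apply ((isClosed_collisionSimplex _ _).measurableSet.preimage
        (measurable_insertNth 0))]
    simp only [hslice, hvol]
    rw [lintegral_indicator measurableSet_Icc, setLIntegral_Icc_pow_div_factorial n ht]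

end CollisionSimplex

section ExtendTimes

variable {t : ℝ} {k : ℕ} {τ : Fin k → ℝ}

lemma extendTimes_zero : extendTimes t τ 0 = t := by
  simp [extendTimes]

lemma extendTimes_succ {j : ℕ} (hj : j < k) : extendTimes t τ (j + 1) = τ ⟨j, hj⟩ := by
  simp [extendTimes, hj]

lemma extendTimes_nonneg (ht : 0 ≤ t) (hτ : τ ∈ collisionSimplex k t) (j : ℕ) :
    0 ≤ extendTimes t τ j := by
  unfold extendTimes
  split_ifs with h
  · exact (hτ.1 _).1
  · exact ht

lemma extendTimes_succ_le (hτ : τ ∈ collisionSimplex k t) {j : ℕ} (hj : j < k) :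
    extendTimes t τ (j + 1) ≤ extendTimes t τ j := by
  rw [extendTimes_succ hj]
  cases j with
  | zero =>
    rw [extendTimes_zero]
    exact (hτ.1 _).2
  | succ j =>
    rw [extendTimes_succ (by omega)]
    exact hτ.2 _ _ (Fin.mk_le_mk.2 j.le_succ)

end ExtendTimes

section AdjointIntegrand

variable {d : ℕ} {r t M : ℝ} {x v : EuclideanSpace ℝ (Fin d)}
  {φ : EuclideanSpace ℝ (Fin d) × EuclideanSpace ℝ (Fin d) → ℝ}

local notation "S" => sphere (0 : EuclideanSpace ℝ (Fin d)) 1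

lemma abs_adjointIntegrand_le (hbound : ∀ z, |φ z| ≤ M) (ht : 0 ≤ t) {n : ℕ}
    {q : (Fin n → ℝ) × (Fin n → S)} (hq : q ∈ adjointDomain d n t) :
    |adjointIntegrand d n r φ t x v q| ≤ M * collisionWeight d r v q.2 := by
  set V := fun l : ℕ => dimConst d * ‖forwardVelocity d r v (extendAngles d n q.2) l‖
  have hV : ∀ l, 0 ≤ V l := fun l => mul_nonneg dimConst_nonneg (norm_nonneg _)
  have hexp : Real.exp ((∑ j : Fin n, V j * (extendTimes t q.1 (j + 1) - extendTimes t q.1 j))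
      - V n * extendTimes t q.1 n) ≤ 1 := by
    refine Real.exp_le_one_iff.2 (sub_nonpos_of_le ((Finset.sum_nonpos fun j _ => ?_).trans
      (mul_nonneg (hV n) (extendTimes_nonneg ht hq.1 n))))
    exact mul_nonpos_of_nonneg_of_nonpos (hV j) (sub_nonpos.2 (extendTimes_succ_le hq.1 j.2))
  have hW := collisionWeight_nonneg (r := r) (v := v) q.2
  change |Real.exp _ * collisionWeight d r v q.2 * φ _| ≤ _
  rw [abs_mul, abs_mul, Real.abs_exp, abs_of_nonneg hW, mul_comm M]
  exact mul_le_mul (mul_le_of_le_one_left hW hexp) (hbound _) (abs_nonneg _) hW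

lemma lintegral_abs_adjointIntegrand_le (hd : 0 < d) (hr : r ∈ Set.Icc (-1 : ℝ) 1) (hM : 0 ≤ M)
    (hbound : ∀ z, |φ z| ≤ M) (ht : 0 ≤ t) (n : ℕ) :
    ∫⁻ q in adjointDomain d n t, ENNReal.ofReal |adjointIntegrand d n r φ t x v q|
        ∂adjointMeasure d n
      ≤ ENNReal.ofReal (M * (dimConst d * ‖v‖ * t) ^ n / n.factorial) := by
  calc ∫⁻ q in adjointDomain d n t, ENNReal.ofReal |adjointIntegrand d n r φ t x v q|
        ∂adjointMeasure d n
      ≤ ∫⁻ q in adjointDomain d n t, ENNReal.ofReal M * ENNReal.ofReal (collisionWeight d r v q.2)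
        ∂adjointMeasure d n :=
        setLIntegral_mono' ((isClosed_collisionSimplex n t).measurableSet.prod .univ)
          fun q hq => by
            rw [← ENNReal.ofReal_mul hM]
            exact ENNReal.ofReal_le_ofReal (abs_adjointIntegrand_le hbound ht hq)
    _ = ENNReal.ofReal M * volume (collisionSimplex n t) * ∫⁻ ω, ENNReal.ofReal
          (collisionWeight d r v ω) ∂(Measure.pi fun _ => sphereSurfaceMeasure d) := by
        rw [adjointMeasure, adjointDomain, ← Measure.prod_restrict, Measure.restrict_univ,
          lintegral_prod_mul aemeasurable_const
          (measurable_collisionWeight n).ennreal_ofReal.aemeasurable, lintegral_const,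
          Measure.restrict_apply_univ]
    _ ≤ ENNReal.ofReal M * ENNReal.ofReal (t ^ n / n.factorial)
          * ENNReal.ofReal (dimConst d * ‖v‖) ^ n := by
        rw [volume_collisionSimplex n ht]
        gcongr
        exact lintegral_collisionWeight_le hd hr n
    _ = ENNReal.ofReal (M * (dimConst d * ‖v‖ * t) ^ n / n.factorial) := by
        rw [← ENNReal.ofReal_pow (mul_nonneg dimConst_nonneg (norm_nonneg v)),
          ← ENNReal.ofReal_mul hM, ← ENNReal.ofReal_mul (by positivity)]
        congr 1
        ring

end AdjointIntegrand

lemma Real.hasSum_mul_pow_succ_div_factorial (M z : ℝ) :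
    HasSum (fun k : ℕ => M * z ^ (k + 1) / (k + 1).factorial) (M * (Real.exp z - 1)) := by
  have h := NormedSpace.expSeries_div_hasSum_exp z
  rw [← Real.exp_eq_exp_ℝ] at h
  simpa [mul_div_assoc] using ((hasSum_nat_add_iff' 1).2 h).mul_left M

section ExponentialBounds

variable {M z : ℝ}

lemma ENNReal.tsum_lt_top_of_le_pow_succ_div_factorial (hM : 0 ≤ M) (hz : 0 ≤ z) {f : ℕ → ℝ≥0∞}
    (hf : ∀ k, f k ≤ ENNReal.ofReal (M * z ^ (k + 1) / (k + 1).factorial)) : ∑' k, f k < ⊤ := by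
  have hb := Real.hasSum_mul_pow_succ_div_factorial M z
  calc ∑' k, f k ≤ ∑' k, ENNReal.ofReal (M * z ^ (k + 1) / (k + 1).factorial) :=
        ENNReal.tsum_le_tsum hf
    _ = ENNReal.ofReal (M * (Real.exp z - 1)) := by
        rw [← ENNReal.ofReal_tsum_of_nonneg (fun k => by positivity) hb.summable, hb.tsum_eq]
    _ < ⊤ := ENNReal.ofReal_lt_top

lemma abs_add_tsum_le_mul_exp {a : ℝ} {f : ℕ → ℝ} (ha : |a| ≤ M)
    (hf : ∀ k, |f k| ≤ M * z ^ (k + 1) / (k + 1).factorial) :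
    |a + ∑' k, f k| ≤ M * Real.exp z := by
  have hb := Real.hasSum_mul_pow_succ_div_factorial M z
  have htsum : ‖∑' k, f k‖ ≤ M * (Real.exp z - 1) :=
    tsum_of_norm_bounded hb fun k => (Real.norm_eq_abs _).trans_le (hf k)
  calc |a + ∑' k, f k| ≤ M + M * (Real.exp z - 1) :=
        (abs_add_le _ _).trans (add_le_add ha htsum)
    _ = M * Real.exp z := by ring

end ExponentialBounds

theorem adjoint_series_converges_and_bounded_general (d : ℕ) (hd : 2 ≤ d) (r : ℝ)
    (hr : r ∈ Set.Ioc (0 : ℝ) 1) (M : ℝ) (hM : 0 ≤ M)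
    (φ : EuclideanSpace ℝ (Fin d) × EuclideanSpace ℝ (Fin d) → ℝ)
    (hbound : ∀ z, |φ z| ≤ M)
    (t : ℝ) (ht : 0 ≤ t) (x v : EuclideanSpace ℝ (Fin d)) :
    (∑' k : ℕ, ∫⁻ q in adjointDomain d (k + 1) t,
        ENNReal.ofReal |adjointIntegrand d (k + 1) r φ t x v q| ∂ adjointMeasure d (k + 1)) < ⊤ ∧
    |Real.exp (-(dimConst d) * ‖v‖ * t) * φ (x + t • v, v)
        + ∑' k : ℕ, ∫ q in adjointDomain d (k + 1) t,
            adjointIntegrand d (k + 1) r φ t x v q ∂ adjointMeasure d (k + 1)|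
      ≤ M * Real.exp (dimConst d * ‖v‖ * t) := by
  have hz : 0 ≤ dimConst d * ‖v‖ * t := mul_nonneg (mul_nonneg dimConst_nonneg (norm_nonneg v)) ht
  have hterm := fun k => lintegral_abs_adjointIntegrand_le (x := x) (v := v) (by omega)
    ⟨by linarith [hr.1], hr.2⟩ hM hbound ht (k + 1)
  refine ⟨ENNReal.tsum_lt_top_of_le_pow_succ_div_factorial hM hz hterm,
    abs_add_tsum_le_mul_exp ?_ fun k => ?_⟩
  · rw [abs_mul, Real.abs_exp]
    refine (mul_le_of_le_one_left (abs_nonneg _) (Real.exp_le_one_iff.2 ?_)).trans (hbound _)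
    rw [neg_mul, neg_mul]
    exact neg_nonpos.2 hz
  · exact (norm_integral_le_lintegral_norm (adjointIntegrand d (k + 1) r φ t x v)).trans
      (ENNReal.toReal_le_of_le_ofReal (by positivity)
        (by simpa only [Real.norm_eq_abs] using hterm k))

/-- The series representation `ψ` of the solution of the adjoint equation of the linear
inelastic Boltzmann equation converges absolutely, and `|ψ(t,x,v)| ≤ M·exp(C_d‖v‖t)` whenever
`|φ| ≤ M`. -/
theorem adjoint_series_converges_and_bounded (d : ℕ) (hd : 2 ≤ d) (r : ℝ)
    (hr : r ∈ Set.Ioc (0 : ℝ) 1) (M : ℝ) (hM : 0 ≤ M)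
    (φ : EuclideanSpace ℝ (Fin d) × EuclideanSpace ℝ (Fin d) → ℝ)
    (hcont : Continuous φ) (hbound : ∀ z, |φ z| ≤ M)
    (t : ℝ) (ht : 0 ≤ t) (x v : EuclideanSpace ℝ (Fin d)) :
    (∑' k : ℕ, ∫⁻ q in adjointDomain d (k + 1) t,
        ENNReal.ofReal |adjointIntegrand d (k + 1) r φ t x v q| ∂ adjointMeasure d (k + 1)) < ⊤ ∧
    |Real.exp (-(dimConst d) * ‖v‖ * t) * φ (x + t • v, v)
        + ∑' k : ℕ, ∫ q in adjointDomain d (k + 1) t,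
            adjointIntegrand d (k + 1) r φ t x v q ∂ adjointMeasure d (k + 1)|
      ≤ M * Real.exp (dimConst d * ‖v‖ * t) :=
  adjoint_series_converges_and_bounded_general d hd r hr M hM φ hbound t ht x v

end
end

section
/- Let d ≥ 1, ε > 0, and x₁, x₂, x₃ ∈ ℝ^d (Euclidean space). Let y₁, y₂, y₃ ∈ ℝ^d satisfy ‖y₂ − y₁‖ = ‖x₂ − x₁‖, ‖y₃ − y₂‖ = ‖x₃ − x₂‖, and y₂ ∈ [y₁, y₃] (so y₁, y₂, y₃ are aligned, in this order). Then, with volume denoting the Lebesgue measure on ℝ^d, [a,b] the closed segment between a and b, and A + B the Minkowski sum, volume(([x₁,x₂] ∪ [x₂,x₃]) + closedBall(0,ε)) ≤ volume(([y₁,y₂] ∪ [y₂,y₃]) + closedBall(0,ε)). In other words, the Lebesgue measure of the twisted tube (the ε-neighbourhood of the broken line through x₁, x₂, x₃) is maximal when the three points are aligned and in this order. -/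
open MeasureTheory Metric Set
open scoped Pointwise RealInnerProductSpace

/-!
Write `Kᵢ` for the `ε`-neighbourhoods of the two segments. By inclusion–exclusion,
`vol (K₁ ∪ K₂) = vol K₁ + vol K₂ - vol (K₁ ∩ K₂)`. Each `vol Kᵢ` depends only on the length of the
segment, since translations and linear isometries preserve volume, so it is the same for the
`x`'s and the `y`'s. The intersection always contains the ball of radius `ε` around the middle
point, and in the aligned case it is exactly that ball: for any `z`, the angle at `y₂` between
`z - y₂` and one of the two segments is obtuse, which makes `y₂` the nearest point of that
segment to `z`.
-/

theorem isCompact_segment {E : Type*} [AddCommGroup E] [Module ℝ E] [TopologicalSpace E]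
    [ContinuousAdd E] [ContinuousSMul ℝ E] (a b : E) : IsCompact (segment ℝ a b) := by
  rw [segment_eq_image]
  exact isCompact_Icc.image (by fun_prop)

section Thickening

variable {E : Type*} [SeminormedAddCommGroup E]

theorem exists_dist_le_of_mem_add_closedBall {s : Set E} {ε : ℝ} {z : E}
    (hz : z ∈ s + closedBall 0 ε) : ∃ p ∈ s, dist z p ≤ ε := by
  obtain ⟨p, hp, v, hv, rfl⟩ := hz
  exact ⟨p, hp, by simpa [dist_eq_norm] using hv⟩

theorem closedBall_subset_add_closedBall {s : Set E} {p : E} (hp : p ∈ s) (ε : ℝ) :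
    closedBall p ε ⊆ s + closedBall 0 ε := by
  rw [← singleton_add_closedBall_zero]
  exact add_subset_add_right (singleton_subset_iff.mpr hp)

theorem closedBall_subset_segment_add_closedBall_inter [Module ℝ E] (a b c : E) (ε : ℝ) :
    closedBall b ε ⊆ (segment ℝ a b + closedBall 0 ε) ∩ (segment ℝ b c + closedBall 0 ε) :=
  subset_inter (closedBall_subset_add_closedBall (right_mem_segment ℝ a b) ε)
    (closedBall_subset_add_closedBall (left_mem_segment ℝ b c) ε)

end Thickening

theorem measure_union_le_of_measure_eq_of_inter_le {α : Type*} [MeasurableSpace α]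
    {μ : Measure α} {s₁ s₂ t₁ t₂ : Set α} (hs₂ : MeasurableSet s₂) (ht₂ : MeasurableSet t₂)
    (h₁ : μ s₁ = μ t₁) (h₂ : μ s₂ = μ t₂) (hinter : μ (t₁ ∩ t₂) ≤ μ (s₁ ∩ s₂))
    (hfin : μ (t₁ ∩ t₂) ≠ ⊤) : μ (s₁ ∪ s₂) ≤ μ (t₁ ∪ t₂) := by
  refine (ENNReal.add_le_add_iff_right hfin).mp ?_
  calc μ (s₁ ∪ s₂) + μ (t₁ ∩ t₂) ≤ μ (s₁ ∪ s₂) + μ (s₁ ∩ s₂) := add_le_add_right hinter _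
    _ = μ (t₁ ∪ t₂) + μ (t₁ ∩ t₂) := by
      rw [measure_union_add_inter _ hs₂, measure_union_add_inter _ ht₂, h₁, h₂]

section Geometry

variable {E : Type*} [NormedAddCommGroup E] [InnerProductSpace ℝ E]

theorem norm_le_norm_sub_smul_of_inner_nonpos {u v : E} {s : ℝ} (hs : 0 ≤ s)
    (huv : ⟪u, v⟫ ≤ 0) : ‖u‖ ≤ ‖u - s • v‖ := by
  have h : ‖u - s • v‖ ^ 2 = ‖u‖ ^ 2 - 2 * (s * ⟪u, v⟫) + ‖s • v‖ ^ 2 := by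
    rw [← real_inner_smul_right, norm_sub_sq_real]
  refine le_of_sq_le_sq ?_ (norm_nonneg _)
  nlinarith [mul_nonneg hs (neg_nonneg.mpr huv), sq_nonneg ‖s • v‖]

theorem dist_le_dist_of_mem_segment_of_inner_nonpos {z a b p : E} (hp : p ∈ segment ℝ a b)
    (h : ⟪z - a, b - a⟫ ≤ 0) : dist z a ≤ dist z p := by
  obtain ⟨t, ⟨ht, -⟩, rfl⟩ := (segment_eq_image' ℝ a b).subset hp
  rw [dist_eq_norm, dist_eq_norm, sub_add_eq_sub_sub]
  exact norm_le_norm_sub_smul_of_inner_nonpos ht h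

theorem inner_sub_nonpos_or_of_mem_segment {a b c : E} (hb : b ∈ segment ℝ a c) (u : E) :
    ⟪u, a - b⟫ ≤ 0 ∨ ⟪u, c - b⟫ ≤ 0 := by
  by_contra! h
  simp only [inner_sub_right, sub_pos] at h
  have := (convex_halfSpace_gt (innerₛₗ ℝ u).isLinear ⟪u, b⟫).segment_subset h.1 h.2 hb
  exact lt_irrefl ⟪u, b⟫ this

theorem segment_add_closedBall_inter_eq_closedBall {a b c : E} (hb : b ∈ segment ℝ a c)
    (ε : ℝ) : (segment ℝ a b + closedBall 0 ε) ∩ (segment ℝ b c + closedBall 0 ε)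
      = closedBall b ε := by
  refine Subset.antisymm ?_ (closedBall_subset_segment_add_closedBall_inter a b c ε)
  rintro z ⟨hza, hzc⟩
  obtain ⟨p, hp, hzp⟩ := exists_dist_le_of_mem_add_closedBall hza
  obtain ⟨q, hq, hzq⟩ := exists_dist_le_of_mem_add_closedBall hzc
  rw [mem_closedBall]
  rcases inner_sub_nonpos_or_of_mem_segment hb (z - b) with h | h
  · rw [segment_symm] at hp
    exact (dist_le_dist_of_mem_segment_of_inner_nonpos hp h).trans hzp
  · exact (dist_le_dist_of_mem_segment_of_inner_nonpos hq h).trans hzq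

theorem LinearIsometryEquiv.image_segment_add_closedBall {F : Type*} [NormedAddCommGroup F]
    [InnerProductSpace ℝ F] (f : E ≃ₗᵢ[ℝ] F) (a b : E) (ε : ℝ) :
    f '' (segment ℝ a b + closedBall 0 ε) = segment ℝ (f a) (f b) + closedBall 0 ε := by
  rw [image_add, f.image_closedBall, map_zero]
  congr 1
  exact image_segment ℝ f.toLinearEquiv.toLinearMap.toAffineMap a b

variable [FiniteDimensional ℝ E] [MeasurableSpace E] [BorelSpace E]

theorem LinearIsometryEquiv.volume_segment_add_closedBall (f : E ≃ₗᵢ[ℝ] E) (a b : E) (ε : ℝ) :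
    volume (segment ℝ (f a) (f b) + closedBall 0 ε)
      = volume (segment ℝ a b + closedBall 0 ε) := by
  rw [← f.image_segment_add_closedBall, f.image_eq_preimage_symm,
    f.symm.measurePreserving.measure_preimage_emb f.symm.toHomeomorph.measurableEmbedding]

theorem volume_segment_add_closedBall_eq_zero_segment (a b : E) (ε : ℝ) :
    volume (segment ℝ a b + closedBall 0 ε)
      = volume (segment ℝ 0 (b - a) + closedBall 0 ε) := by
  have hseg : segment ℝ a b = a +ᵥ segment ℝ 0 (b - a) := by simp
  rw [hseg, vadd_add_assoc, measure_vadd]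

theorem volume_segment_add_closedBall_eq {a b a' b' : E} (h : ‖b - a‖ = ‖b' - a'‖) (ε : ℝ) :
    volume (segment ℝ a b + closedBall 0 ε) = volume (segment ℝ a' b' + closedBall 0 ε) := by
  rw [volume_segment_add_closedBall_eq_zero_segment,
    volume_segment_add_closedBall_eq_zero_segment a', ← Submodule.reflection_sub h,
    ← LinearIsometryEquiv.volume_segment_add_closedBall _ 0, map_zero]

end Geometry

theorem twisted_tube_measure_le_general (d : ℕ) (ε : ℝ)
    (x₁ x₂ x₃ y₁ y₂ y₃ : EuclideanSpace ℝ (Fin d))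
    (h₁ : ‖y₂ - y₁‖ = ‖x₂ - x₁‖) (h₂ : ‖y₃ - y₂‖ = ‖x₃ - x₂‖)
    (hy : y₂ ∈ segment ℝ y₁ y₃) :
    volume ((segment ℝ x₁ x₂ ∪ segment ℝ x₂ x₃)
        + closedBall (0 : EuclideanSpace ℝ (Fin d)) ε)
      ≤ volume ((segment ℝ y₁ y₂ ∪ segment ℝ y₂ y₃)
        + closedBall (0 : EuclideanSpace ℝ (Fin d)) ε) := by
  have hmeas (a b : EuclideanSpace ℝ (Fin d)) : MeasurableSet (segment ℝ a b + closedBall 0 ε) :=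
    ((isCompact_segment a b).add (isCompact_closedBall 0 ε)).measurableSet
  rw [union_add, union_add]
  refine measure_union_le_of_measure_eq_of_inter_le (hmeas x₂ x₃) (hmeas y₂ y₃)
    (volume_segment_add_closedBall_eq h₁.symm ε) (volume_segment_add_closedBall_eq h₂.symm ε)
    ?_ ?_ <;> rw [segment_add_closedBall_inter_eq_closedBall hy]
  · rw [Measure.addHaar_closedBall_center, ← Measure.addHaar_closedBall_center volume x₂]
    exact measure_mono (closedBall_subset_segment_add_closedBall_inter x₁ x₂ x₃ ε)
  · exact measure_closedBall_lt_top.ne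

/-- The measure of a twisted tube is maximal when the three points are aligned, in this order:
if `‖y₂−y₁‖ = ‖x₂−x₁‖`, `‖y₃−y₂‖ = ‖x₃−x₂‖` and `y₂` lies on the segment `[y₁,y₃]`, then the
`ε`-neighbourhood of the broken line through `x₁,x₂,x₃` has measure at most that of the
`ε`-neighbourhood of the broken line through `y₁,y₂,y₃`. -/
theorem twisted_tube_measure_le (d : ℕ) (hd : 1 ≤ d) (ε : ℝ) (hε : 0 < ε)
    (x₁ x₂ x₃ y₁ y₂ y₃ : EuclideanSpace ℝ (Fin d))
    (h₁ : ‖y₂ - y₁‖ = ‖x₂ - x₁‖) (h₂ : ‖y₃ - y₂‖ = ‖x₃ - x₂‖)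
    (hy : y₂ ∈ segment ℝ y₁ y₃) :
    volume ((segment ℝ x₁ x₂ ∪ segment ℝ x₂ x₃)
        + closedBall (0 : EuclideanSpace ℝ (Fin d)) ε)
      ≤ volume ((segment ℝ y₁ y₂ ∪ segment ℝ y₂ y₃)
        + closedBall (0 : EuclideanSpace ℝ (Fin d)) ε) :=
  twisted_tube_measure_le_general d ε x₁ x₂ x₃ y₁ y₂ y₃ h₁ h₂ hy
end

section
/- Let r ∈ (0,1), u ∈ (0,1), and θ₀ ∈ ℝ with cos θ₀·sin θ₀ ≠ 0. Set C := 1 − (1+r)cos²θ₀ and define the quartic polynomial P(X) := C²·(1 − u² − X)·X·(1 + (r−1)X)² − cos²θ₀·sin²θ₀·(1 − u² − 2X + (1−r²)X²)². Then P has at most two roots in the interval [0,1]: the set {X ∈ [0,1] : P(X) = 0} has at most two elements. -/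
/-!
Write `v = 1 - u²`, `K = cos²θ₀ sin²θ₀ > 0`, `Q = v - 2X + (1 - r²)X²` and
`N = (v - X) X (1 + (r - 1)X)²`, so that `P = C²N - KQ²`. On `[0, 1]` outside `(0, v)` one has
`P < 0`, while on `(0, v)` one has `N > 0`, so the roots are the solutions of `φ² = C²/K` with
`φ = Q / √N`. Since `QN' - 2Q'N > 0` on `(0, v)`, `φ` is strictly decreasing there and takes
each of the two values `±√(C²/K)` at most once.
-/

open Set

theorem Set.encard_le_two_of_injOn_of_sq_eq {α : Type*} {f : α → ℝ} {s : Set α} {c : ℝ}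
    (hf : InjOn f s) (hc : ∀ x ∈ s, f x ^ 2 = c) : s.encard ≤ 2 := by
  have hsub : f '' s ⊆ {√c, -√c} := by
    rintro _ ⟨x, hx, rfl⟩
    rw [← hc x hx, Real.sqrt_sq_eq_abs]
    rcases abs_choice (f x) with h | h <;> simp [h]
  calc s.encard = (f '' s).encard := hf.encard_image.symm
    _ ≤ ({√c, -√c} : Set ℝ).encard := encard_le_encard hsub
    _ ≤ ({-√c} : Set ℝ).encard + 1 := encard_insert_le _ _
    _ = 2 := by rw [encard_singleton]; rfl

theorem strictAntiOn_div_sqrt {p q p' q' : ℝ → ℝ} {a b : ℝ}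
    (hp : ∀ x ∈ Ioo a b, HasDerivAt p (p' x) x) (hq : ∀ x ∈ Ioo a b, HasDerivAt q (q' x) x)
    (hq_pos : ∀ x ∈ Ioo a b, 0 < q x) (h : ∀ x ∈ Ioo a b, 2 * p' x * q x < p x * q' x) :
    StrictAntiOn (fun x => p x / √(q x)) (Ioo a b) := by
  have hderiv : ∀ x ∈ Ioo a b, HasDerivAt (fun x => p x / √(q x))
      ((p' x * √(q x) - p x * (q' x / (2 * √(q x)))) / √(q x) ^ 2) x := fun x hx =>
    (hp x hx).div ((hq x hx).sqrt (hq_pos x hx).ne') (Real.sqrt_pos.2 (hq_pos x hx)).ne'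
  refine strictAntiOn_of_hasDerivWithinAt_neg (convex_Ioo a b)
    (fun x hx => (hderiv x hx).continuousAt.continuousWithinAt)
    (fun x hx => (hderiv x (by rwa [interior_Ioo] at hx)).hasDerivWithinAt) fun x hx => ?_
  rw [interior_Ioo] at hx
  have hs : 0 < √(q x) := Real.sqrt_pos.2 (hq_pos x hx)
  have hsq : √(q x) ^ 2 = q x := Real.sq_sqrt (hq_pos x hx).le
  refine div_neg_of_neg_of_pos ?_ (by positivity)
  rw [sub_neg, mul_div_assoc', lt_div_iff₀ (by positivity)]
  calc p' x * √(q x) * (2 * √(q x)) = 2 * p' x * √(q x) ^ 2 := by ring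
    _ = 2 * p' x * q x := by rw [hsq]
    _ < p x * q' x := h x hx

namespace InelasticQuartic

variable (r v : ℝ)

def Q (X : ℝ) : ℝ := v - 2 * X + (1 - r ^ 2) * X ^ 2

def N (X : ℝ) : ℝ := (v - X) * X * (1 + (r - 1) * X) ^ 2

def Q' (X : ℝ) : ℝ := -2 + 2 * (1 - r ^ 2) * X

def N' (X : ℝ) : ℝ :=
  (v - 2 * X) * (1 + (r - 1) * X) ^ 2 + 2 * (r - 1) * (v - X) * X * (1 + (r - 1) * X)

theorem hasDerivAt_Q (x : ℝ) : HasDerivAt (Q r v) (Q' r x) x := by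
  have h := (((hasDerivAt_id' x).const_mul 2).const_sub v).add
    ((hasDerivAt_pow 2 x).const_mul (1 - r ^ 2))
  exact h.congr_deriv (by simp only [Q']; push_cast; ring)

theorem hasDerivAt_N (x : ℝ) : HasDerivAt (N r v) (N' r v x) x := by
  have h := (((hasDerivAt_id' x).const_sub v).mul (hasDerivAt_id' x)).mul
    ((((hasDerivAt_id' x).const_mul (r - 1)).const_add 1).pow 2)
  exact h.congr_deriv (by simp only [N', Pi.mul_apply, Pi.pow_apply]; push_cast; ring)

variable {r v}

theorem N_pos (hr0 : 0 < r) (hv1 : v < 1) {x : ℝ} (hx : x ∈ Ioo 0 v) : 0 < N r v x := by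
  obtain ⟨hx0, hxv⟩ := hx
  have hA : 0 < 1 + (r - 1) * x := by nlinarith
  unfold N
  have := sub_pos.2 hxv
  positivity

theorem two_mul_Q'_mul_N_lt (hr0 : 0 < r) (hr1 : r < 1) (hv1 : v < 1) {x : ℝ}
    (hx : x ∈ Ioo 0 v) : 2 * Q' r x * N r v x < Q r v x * N' r v x := by
  obtain ⟨hx0, hxv⟩ := hx
  set y := (1 - r) * x with hy
  have hy0 : 0 < y := mul_pos (by linarith) hx0
  have hyx : y < x := by nlinarith
  have hW : Q r v x * N' r v x - 2 * Q' r x * N r v x =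
      (1 - y) * (v * ((1 - v) * (y * (1 - y)) + (v - y) * (1 - y) ^ 2)
        + 2 * y ^ 2 * (1 - v) * (v - x)) := by
    simp only [Q, Q', N, N', hy]; ring
  have h1 : 0 < 1 - y := by linarith
  have h2 : 0 < 1 - v := by linarith
  have h3 : 0 < v - y := by linarith
  have h4 : 0 < v - x := by linarith
  have : 0 < (1 - y) * (v * ((1 - v) * (y * (1 - y)) + (v - y) * (1 - y) ^ 2)
      + 2 * y ^ 2 * (1 - v) * (v - x)) := by
    have := hx0.trans hxv
    positivity
  linarith

theorem Q_neg {X : ℝ} (hv0 : 0 < v) (hv1 : v < 1) (hX : X ∈ Icc v 1) : Q r v X < 0 := by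
  obtain ⟨hvX, hX1⟩ := hX
  have hXv : X * (v - 1) < 0 := mul_neg_of_pos_of_neg (hv0.trans_le hvX) (by linarith)
  unfold Q
  nlinarith [mul_nonneg (sub_nonneg.2 hvX) (sub_nonneg.2 hX1),
    mul_nonneg (sq_nonneg r) (sq_nonneg X)]

theorem mem_Ioo_of_root {C K X : ℝ} (hv0 : 0 < v) (hv1 : v < 1) (hK : 0 < K)
    (hX : X ∈ Icc 0 1) (hP : C ^ 2 * (v - X) * X * (1 + (r - 1) * X) ^ 2
      - K * (v - 2 * X + (1 - r ^ 2) * X ^ 2) ^ 2 = 0) : X ∈ Ioo 0 v := by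
  obtain ⟨hX0, hX1⟩ := hX
  refine ⟨hX0.lt_of_ne ?_, lt_of_not_ge fun hvX => ?_⟩
  · rintro rfl
    have : 0 < K * v ^ 2 := by positivity
    linarith
  · have hQ : Q r v X < 0 := Q_neg hv0 hv1 ⟨hvX, hX1⟩
    have hKQ : 0 < K * Q r v X ^ 2 := mul_pos hK (sq_pos_of_neg hQ)
    have hCN : C ^ 2 * (v - X) * X * (1 + (r - 1) * X) ^ 2 ≤ 0 :=
      mul_nonpos_of_nonpos_of_nonneg (mul_nonpos_of_nonpos_of_nonneg
        (mul_nonpos_of_nonneg_of_nonpos (sq_nonneg C) (by linarith)) hX0) (sq_nonneg _)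
    unfold Q at hKQ
    linarith

theorem encard_roots_le_two (C K : ℝ) (hr0 : 0 < r) (hr1 : r < 1) (hv0 : 0 < v) (hv1 : v < 1)
    (hK : 0 < K) :
    {X ∈ Icc (0 : ℝ) 1 | C ^ 2 * (v - X) * X * (1 + (r - 1) * X) ^ 2
      - K * (v - 2 * X + (1 - r ^ 2) * X ^ 2) ^ 2 = 0}.encard ≤ 2 := by
  set S := {X ∈ Icc (0 : ℝ) 1 | C ^ 2 * (v - X) * X * (1 + (r - 1) * X) ^ 2
      - K * (v - 2 * X + (1 - r ^ 2) * X ^ 2) ^ 2 = 0}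
  have hS : S ⊆ Ioo 0 v := fun X hX => mem_Ioo_of_root hv0 hv1 hK hX.1 hX.2
  have hanti : StrictAntiOn (fun x => Q r v x / √(N r v x)) (Ioo 0 v) :=
    strictAntiOn_div_sqrt (fun x _ => hasDerivAt_Q r v x) (fun x _ => hasDerivAt_N r v x)
      (fun x hx => N_pos hr0 hv1 hx) (fun x hx => two_mul_Q'_mul_N_lt hr0 hr1 hv1 hx)
  refine encard_le_two_of_injOn_of_sq_eq (hanti.injOn.mono hS) (c := K⁻¹ * C ^ 2) fun x hx => ?_
  have hN := N_pos hr0 hv1 (hS hx)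
  rw [div_pow, Real.sq_sqrt hN.le, div_eq_iff hN.ne']
  field_simp
  simp only [Q, N]
  linear_combination -hx.2

end InelasticQuartic

/-- The quartic polynomial `P(X) = C²·(1−u²−X)·X·(1+(r−1)X)² − cos²θ₀·sin²θ₀·(1−u²−2X+(1−r²)X²)²`,
with `C = 1 − (1+r)cos²θ₀`, has at most two roots in `[0,1]`. -/
theorem quartic_at_most_two_roots (r u θ₀ : ℝ) (hr : r ∈ Set.Ioo (0 : ℝ) 1)
    (hu : u ∈ Set.Ioo (0 : ℝ) 1) (hθ₀ : Real.cos θ₀ * Real.sin θ₀ ≠ 0) :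
    {X ∈ Set.Icc (0 : ℝ) 1 |
        (1 - (1 + r) * Real.cos θ₀ ^ 2) ^ 2 * (1 - u ^ 2 - X) * X * (1 + (r - 1) * X) ^ 2
          - Real.cos θ₀ ^ 2 * Real.sin θ₀ ^ 2 *
              (1 - u ^ 2 - 2 * X + (1 - r ^ 2) * X ^ 2) ^ 2 = 0}.encard ≤ 2 := by
  obtain ⟨hr0, hr1⟩ := hr
  obtain ⟨hu0, hu1⟩ := hu
  have hK : 0 < Real.cos θ₀ ^ 2 * Real.sin θ₀ ^ 2 := by
    rw [← mul_pow]
    positivity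
  exact InelasticQuartic.encard_roots_le_two _ _ hr0 hr1 (by nlinarith) (by nlinarith) hK
end

section
/- Let r ∈ (0,1] and θ₀ ∈ ℝ, and define for θ ∈ ℝ the function f(θ) := (1 − (1+r)cos²θ₀ − (1+r)cos²θ + (1+r)²·cos θ₀·cos θ·cos(θ − θ₀)) / √((1 − (1−r²)cos²θ₀)(1 − (1−r²)cos²θ)). Then f is differentiable and its derivative satisfies, for all θ ∈ ℝ, the factorization (1 − (1−r²)cos²θ₀)^{1/2}·(1 − (1−r²)cos²θ)^{3/2}·f'(θ) = (1+r)²·sin(θ − θ₀)·(−r·cos²θ − sin²θ)·(r·cos θ₀·cos θ + sin θ₀·sin θ). -/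
/-- The scalar product of two renormalized inelastic post-collisional velocities in the
coplanar case, as a function of the angles `θ₀` (from `v` to `σ`) and `θ` (from `v` to `ω`). -/
noncomputable def coplanarScalarProduct (r θ₀ θ : ℝ) : ℝ :=
  (1 - (1 + r) * Real.cos θ₀ ^ 2 - (1 + r) * Real.cos θ ^ 2
      + (1 + r) ^ 2 * Real.cos θ₀ * Real.cos θ * Real.cos (θ - θ₀)) /
    Real.sqrt ((1 - (1 - r ^ 2) * Real.cos θ₀ ^ 2) * (1 - (1 - r ^ 2) * Real.cos θ ^ 2))

open Real

/-! With `W θ = 1 - (1 - r²) cos² θ = sin² θ + r² cos² θ`, positive as soon as `r ≠ 0`, and `N` the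
numerator, the scalar product is `N / √(W θ₀ · W θ)`, so the quotient rule gives
`W(θ₀)^(1/2) W(θ)^(3/2) f' = N' W - N W' / 2`. That this trigonometric polynomial factors as
claimed is a polynomial identity modulo `sin² + cos² = 1` for `θ` and for `θ₀`. -/

theorem HasDerivAt.div_sqrt_const_mul {g h : ℝ → ℝ} {g' h' a x : ℝ} (hg : HasDerivAt g g' x)
    (hh : HasDerivAt h h' x) (ha : 0 < a) (hx : 0 < h x) :
    HasDerivAt (fun y => g y / √(a * h y))
      ((g' * h x - g x * h' / 2) / (a ^ (1 / 2 : ℝ) * h x ^ (3 / 2 : ℝ))) x := by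
  have hax : 0 < a * h x := mul_pos ha hx
  refine (hg.div ((hh.const_mul a).sqrt hax.ne') (sqrt_pos.mpr hax).ne').congr_deriv ?_
  rw [← sqrt_eq_rpow, show (3 / 2 : ℝ) = 1 + 1 / 2 by norm_num, rpow_add hx, rpow_one,
    ← sqrt_eq_rpow, sq_sqrt hax.le, sqrt_mul ha.le]
  have hsa : √a ^ 2 = a := sq_sqrt ha.le
  have hsh : √(h x) ^ 2 = h x := sq_sqrt hx.le
  have : 0 < √a := sqrt_pos.mpr ha
  have : 0 < √(h x) := sqrt_pos.mpr hx
  field_simp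
  rw [hsa, hsh]
  ring

noncomputable def coplanarWeight (r θ : ℝ) : ℝ := 1 - (1 - r ^ 2) * cos θ ^ 2

theorem coplanarWeight_eq_sin_sq_add (r θ : ℝ) :
    coplanarWeight r θ = sin θ ^ 2 + r ^ 2 * cos θ ^ 2 := by
  rw [coplanarWeight, cos_sq']
  ring

theorem coplanarWeight_pos {r : ℝ} (hr : r ≠ 0) (θ : ℝ) : 0 < coplanarWeight r θ := by
  rw [coplanarWeight_eq_sin_sq_add]
  rcases eq_or_ne (sin θ) 0 with hs | hs
  · have hc : cos θ ^ 2 = 1 := by nlinarith [sin_sq_add_cos_sq θ]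
    rw [hs, hc]
    positivity
  · positivity

theorem hasDerivAt_coplanarWeight (r θ : ℝ) :
    HasDerivAt (coplanarWeight r) (2 * ((1 - r ^ 2) * cos θ * sin θ)) θ :=
  (((hasDerivAt_cos θ).pow 2).const_mul (1 - r ^ 2)).const_sub 1 |>.congr_deriv (by ring)

noncomputable def coplanarNumerator (r θ₀ θ : ℝ) : ℝ :=
  1 - (1 + r) * cos θ₀ ^ 2 - (1 + r) * cos θ ^ 2 + (1 + r) ^ 2 * cos θ₀ * cos θ * cos (θ - θ₀)

theorem hasDerivAt_coplanarNumerator (r θ₀ θ : ℝ) :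
    HasDerivAt (coplanarNumerator r θ₀)
      (2 * (1 + r) * cos θ * sin θ
        + (1 + r) ^ 2 * cos θ₀ * (-sin θ * cos (θ - θ₀) - cos θ * sin (θ - θ₀))) θ := by
  have hcos := hasDerivAt_cos θ
  have hcos_sub := (hasDerivAt_cos (θ - θ₀)).comp θ ((hasDerivAt_id θ).sub_const θ₀)
  refine ((((hcos.pow 2).const_mul (1 + r)).const_sub (1 - (1 + r) * cos θ₀ ^ 2)).add
    ((hcos.const_mul ((1 + r) ^ 2 * cos θ₀)).mul hcos_sub)).congr_deriv ?_
  simp only [Function.comp_apply, id_eq]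
  ring

theorem coplanar_quotient_numerator_eq (r θ₀ θ : ℝ) :
    (2 * (1 + r) * cos θ * sin θ
        + (1 + r) ^ 2 * cos θ₀ * (-sin θ * cos (θ - θ₀) - cos θ * sin (θ - θ₀)))
        * coplanarWeight r θ
      - coplanarNumerator r θ₀ θ * (2 * ((1 - r ^ 2) * cos θ * sin θ)) / 2
      = (1 + r) ^ 2 * sin (θ - θ₀) * (-r * cos θ ^ 2 - sin θ ^ 2) *
          (r * cos θ₀ * cos θ + sin θ₀ * sin θ) := by
  rw [coplanarWeight, coplanarNumerator, cos_sub, sin_sub]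
  set c := cos θ
  set s := sin θ
  set c0 := cos θ₀
  set s0 := sin θ₀
  have h1 : s ^ 2 + c ^ 2 = 1 := sin_sq_add_cos_sq θ
  have h2 : s0 ^ 2 + c0 ^ 2 = 1 := sin_sq_add_cos_sq θ₀
  linear_combination
    (s^2*c0*s0 - c*s*s0^2 - c^2*c0*s0 + 2*r*s^2*c0*s0 - 2*r*c*s*s0^2 + r*c*s*c0^2
      - 2*r*c^2*c0*s0 + r^2*s^2*c0*s0 - r^2*c*s*s0^2 + 2*r^2*c*s*c0^2 - r^2*c^2*c0*s0
      + r^3*c*s*c0^2) * h1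
    + (-c*s + c^3*s - 2*r*c*s + r*c^3*s - r^2*c*s - r^2*c^3*s - r^3*c^3*s) * h2

/-- The coplanar scalar product is differentiable, and its derivative satisfies the
factorization
`(1−(1−r²)cos²θ₀)^(1/2)·(1−(1−r²)cos²θ)^(3/2)·f'(θ)
  = (1+r)²·sin(θ−θ₀)·(−r·cos²θ−sin²θ)·(r·cosθ₀·cosθ+sinθ₀·sinθ)`. -/
theorem coplanarScalarProduct_deriv_factorization (r θ₀ : ℝ) (hr : r ∈ Set.Ioc (0 : ℝ) 1) :
    Differentiable ℝ (coplanarScalarProduct r θ₀) ∧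
      ∀ θ : ℝ,
        (1 - (1 - r ^ 2) * Real.cos θ₀ ^ 2) ^ ((1 : ℝ) / 2) *
            (1 - (1 - r ^ 2) * Real.cos θ ^ 2) ^ ((3 : ℝ) / 2) *
            deriv (coplanarScalarProduct r θ₀) θ
          = (1 + r) ^ 2 * Real.sin (θ - θ₀) * (-r * Real.cos θ ^ 2 - Real.sin θ ^ 2) *
              (r * Real.cos θ₀ * Real.cos θ + Real.sin θ₀ * Real.sin θ) := by
  have hW := coplanarWeight_pos hr.1.ne'
  have hderiv (θ : ℝ) : HasDerivAt (coplanarScalarProduct r θ₀) _ θ :=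
    (hasDerivAt_coplanarNumerator r θ₀ θ).div_sqrt_const_mul
      (hasDerivAt_coplanarWeight r θ) (hW θ₀) (hW θ)
  refine ⟨fun θ => (hderiv θ).differentiableAt, fun θ => ?_⟩
  rw [(hderiv θ).deriv]
  have hden := mul_pos (rpow_pos_of_pos (hW θ₀) (1 / 2)) (rpow_pos_of_pos (hW θ) (3 / 2))
  exact (mul_div_cancel₀ _ hden.ne').trans (coplanar_quotient_numerator_eq r θ₀ θ)
end

section
/- Let r ∈ (0,1), q ∈ [1, 1/r], k ∈ ℕ, and u₀ > 0. Let e₁,…,e_k ∈ {0,1} and set s := Σ_{l=1}^{k} e_l. Let a₁,…,a_k be real numbers such that 1 ≤ a_l ≤ q whenever e_l = 0, and q ≤ a_l ≤ 1/r whenever e_l = 1. Define u_l := u₀·∏_{m=1}^{l} a_m for 0 ≤ l ≤ k. Then: (i) ∏_{l=1}^{k} u_{l−1} ≤ (1/r)^{k·s}·q^{(k−s)²/2}·u₀^k; and (ii) u_k ≥ q^s·u₀. -/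
open Finset


/-- Speed-growth estimates along inelastic backward collisions: with `u_l = u₀·∏_{m<l} a_m`,
where each factor `a_l` lies in `[1, q]` (if `e_l = 0`) or `[q, 1/r]` (if `e_l = 1`) and
`s = Σ e_l`, one has
(i) `∏_{l<k} u_l ≤ (1/r)^(k·s) · q^((k-s)²/2) · u₀^k`, and (ii) `q^s · u₀ ≤ u_k`. -/
theorem inelastic_speed_product_bounds (r q : ℝ) (hr : r ∈ Set.Ioo (0 : ℝ) 1)
    (hq : q ∈ Set.Icc (1 : ℝ) (1 / r)) (k : ℕ) (u₀ : ℝ) (hu₀ : 0 < u₀)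
    (e : ℕ → ℕ) (he : ∀ l < k, e l = 0 ∨ e l = 1)
    (a : ℕ → ℝ)
    (ha0 : ∀ l < k, e l = 0 → a l ∈ Set.Icc (1 : ℝ) q)
    (ha1 : ∀ l < k, e l = 1 → a l ∈ Set.Icc q (1 / r))
    (u : ℕ → ℝ) (hu : ∀ l : ℕ, u l = u₀ * ∏ m ∈ Finset.range l, a m) :
    (∏ l ∈ Finset.range k, u l)
        ≤ (1 / r) ^ (k * ∑ l ∈ Finset.range k, e l) *
          q ^ ((((k : ℝ) - ((∑ l ∈ Finset.range k, e l : ℕ) : ℝ)) ^ 2) / 2) * u₀ ^ k ∧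
      q ^ (∑ l ∈ Finset.range k, e l) * u₀ ≤ u k := by
  obtain ⟨hr0, hr1⟩ := hr
  obtain ⟨hq1, hqr⟩ := hq
  have hrinv : (1:ℝ) ≤ 1 / r := one_le_one_div hr0 hr1.le
  have hq0 : (0:ℝ) < q := lt_of_lt_of_le one_pos hq1
  have hz0 : (0:ℝ) < 1 / r := by positivity
  set s := ∑ l ∈ Finset.range k, e l with hs
  have he1 : ∀ l < k, e l ≤ 1 := fun l hl => by rcases he l hl with h | h <;> omega
  have hs_le : s ≤ k := by
    calc s ≤ ∑ l ∈ Finset.range k, 1 :=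
          Finset.sum_le_sum (fun l hl => he1 l (mem_range.mp hl))
      _ = k := by simp
  have haq : ∀ m < k, q ^ (e m) ≤ a m := by
    intro m hm
    rcases he m hm with h | h
    · simpa [h] using (ha0 m hm h).1
    · simpa [h] using (ha1 m hm h).1
  have ha1' : ∀ m < k, 1 ≤ a m := fun m hm =>
    le_trans (one_le_pow₀ hq1) (haq m hm)
  -- Part (ii)
  have part2 : q ^ s * u₀ ≤ u k := by
    have h1 : (q:ℝ) ^ s ≤ ∏ m ∈ range k, a m := by
      rw [hs, ← Finset.prod_pow_eq_pow_sum]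
      exact Finset.prod_le_prod (fun m _ => pow_nonneg hq0.le _)
        (fun m hm => haq m (mem_range.mp hm))
    calc q ^ s * u₀ ≤ (∏ m ∈ range k, a m) * u₀ :=
          mul_le_mul_of_nonneg_right h1 hu₀.le
      _ = u₀ * ∏ m ∈ range k, a m := mul_comm _ _
      _ = u k := (hu k).symm
  -- Part (i)
  set E1 := ∑ l ∈ range k, ∑ m ∈ range l, e m with hE1def
  set E0 := ∑ l ∈ range k, ∑ m ∈ range l, (1 - e m) with hE0def
  have hinner : ∀ l ≤ k, ∏ m ∈ range l, a m ≤
      (1/r) ^ (∑ m ∈ range l, e m) * q ^ (∑ m ∈ range l, (1 - e m)) := by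
    intro l hl
    rw [← Finset.prod_pow_eq_pow_sum, ← Finset.prod_pow_eq_pow_sum,
      ← Finset.prod_mul_distrib]
    refine Finset.prod_le_prod
      (fun m hm => le_trans zero_le_one (ha1' m (lt_of_lt_of_le (mem_range.mp hm) hl))) ?_
    intro m hm
    have hmk : m < k := lt_of_lt_of_le (mem_range.mp hm) hl
    rcases he m hmk with h | h
    · simpa [h] using (ha0 m hmk h).2
    · simpa [h] using (ha1 m hmk h).2
  have hP_nonneg : ∀ l ∈ range k, (0:ℝ) ≤ ∏ m ∈ range l, a m := by
    intro l hl
    exact Finset.prod_nonneg (fun m hm => le_trans zero_le_one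
      (ha1' m (lt_of_lt_of_le (mem_range.mp hm) (le_of_lt (mem_range.mp hl)))))
  have hstep : ∏ l ∈ range k, ∏ m ∈ range l, a m ≤ (1/r) ^ E1 * q ^ E0 := by
    rw [hE1def, hE0def, ← Finset.prod_pow_eq_pow_sum, ← Finset.prod_pow_eq_pow_sum,
      ← Finset.prod_mul_distrib]
    exact Finset.prod_le_prod hP_nonneg
      (fun l hl => hinner l (le_of_lt (mem_range.mp hl)))
  have hE10 : E1 + E0 = ∑ l ∈ range k, l := by
    rw [hE1def, hE0def, ← Finset.sum_add_distrib]
    refine Finset.sum_congr rfl (fun l hl => ?_)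
    rw [← Finset.sum_add_distrib]
    calc ∑ m ∈ range l, (e m + (1 - e m)) = ∑ m ∈ range l, 1 :=
          Finset.sum_congr rfl (fun m hm => by
            have := he1 m (lt_of_lt_of_le (mem_range.mp hm) (le_of_lt (mem_range.mp hl)))
            omega)
      _ = l := by simp
  have hE1le : E1 ≤ k * s := by
    calc E1 ≤ ∑ _l ∈ range k, s := by
          refine Finset.sum_le_sum (fun l hl => ?_)
          exact Finset.sum_le_sum_of_subset
            (Finset.range_subset_range.mpr (le_of_lt (mem_range.mp hl)))
      _ = k * s := by simp [mul_comm]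
  -- Gauss sum, cast to ℝ
  have hG2 : ((∑ l ∈ range k, l : ℕ) : ℝ) * 2 = (k:ℝ) * k - k := by
    have h1 : (∑ i ∈ range k, i) * 2 = k * k - k := by
      rw [Finset.sum_range_id_mul_two]
      cases k with
      | zero => rfl
      | succ n =>
        simp only [Nat.succ_sub_one, Nat.succ_mul, Nat.mul_succ]
        omega
    have hk : k ≤ k * k := by nlinarith
    calc ((∑ l ∈ range k, l : ℕ) : ℝ) * 2 = ((((∑ l ∈ range k, l) * 2 : ℕ)) : ℝ) := by
          push_cast; ring
      _ = ((k * k - k : ℕ) : ℝ) := by rw [h1]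
      _ = (k:ℝ) * k - k := by push_cast [Nat.cast_sub hk]; ring
  set z : ℝ := (((k : ℝ) - (s:ℝ)) ^ 2) / 2 with hzdef
  have key : (1/r) ^ E1 * q ^ E0 ≤ (1/r) ^ (k * s) * q ^ z := by
    by_cases hcase : (E0:ℝ) ≤ z
    · refine mul_le_mul (pow_le_pow_right₀ hrinv hE1le) ?_ (by positivity) (by positivity)
      calc (q:ℝ) ^ E0 = q ^ (E0:ℝ) := (Real.rpow_natCast q E0).symm
        _ ≤ q ^ z := Real.rpow_le_rpow_of_exponent_le hq1 hcase
    · push_neg at hcase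
      have h1 : (q:ℝ) ^ E0 = q ^ z * q ^ ((E0:ℝ) - z) := by
        rw [← Real.rpow_natCast q E0, ← Real.rpow_add hq0]; ring_nf
      have h2 : (q:ℝ) ^ ((E0:ℝ) - z) ≤ (1/r) ^ ((E0:ℝ) - z) :=
        Real.rpow_le_rpow hq0.le hqr (by linarith)
      have hcast : (E1:ℝ) + (E0:ℝ) = ((∑ l ∈ range k, l : ℕ) : ℝ) := by
        exact_mod_cast congrArg (Nat.cast : ℕ → ℝ) hE10
      have hexp : (E1:ℝ) + ((E0:ℝ) - z) ≤ ((k * s : ℕ) : ℝ) := by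
        have hsk : (s:ℝ) ≤ (k:ℝ) := by exact_mod_cast hs_le
        push_cast
        rw [hzdef]
        nlinarith [hG2, hcast]
      calc (1/r) ^ E1 * q ^ E0 = (1/r) ^ E1 * (q ^ z * q ^ ((E0:ℝ) - z)) := by rw [h1]
        _ ≤ (1/r) ^ E1 * (q ^ z * (1/r) ^ ((E0:ℝ) - z)) := by
            refine mul_le_mul_of_nonneg_left ?_ (by positivity)
            exact mul_le_mul_of_nonneg_left h2 (by positivity)
        _ = q ^ z * ((1/r) ^ ((E1:ℝ)) * (1/r) ^ ((E0:ℝ) - z)) := by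
            rw [Real.rpow_natCast]; ring
        _ = q ^ z * (1/r) ^ ((E1:ℝ) + ((E0:ℝ) - z)) := by rw [← Real.rpow_add hz0]
        _ ≤ q ^ z * (1/r) ^ (((k * s : ℕ)) : ℝ) := by
            refine mul_le_mul_of_nonneg_left
              (Real.rpow_le_rpow_of_exponent_le hrinv hexp) (by positivity)
        _ = (1/r) ^ (k * s) * q ^ z := by rw [Real.rpow_natCast]; ring
  have part1 : (∏ l ∈ Finset.range k, u l) ≤ (1/r) ^ (k * s) * q ^ z * u₀ ^ k := by
    have hprod_u : ∏ l ∈ range k, u l = u₀ ^ k * ∏ l ∈ range k, ∏ m ∈ range l, a m := by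
      simp_rw [hu]
      rw [Finset.prod_mul_distrib, Finset.prod_const, card_range]
    calc ∏ l ∈ range k, u l = u₀ ^ k * ∏ l ∈ range k, ∏ m ∈ range l, a m := hprod_u
      _ ≤ u₀ ^ k * ((1/r) ^ (k * s) * q ^ z) :=
          mul_le_mul_of_nonneg_left (le_trans hstep key) (pow_nonneg hu₀.le k)
      _ = (1/r) ^ (k * s) * q ^ z * u₀ ^ k := by ring
  exact ⟨part1, part2⟩
end
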